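/- For all natural numbers r and p with p > 0 and every real x with |x| < 2, Σ_{n=1}^∞ C(n+r,n) n^p (ζ(n+1) − 1) x^n = (1/r!) Σ_{j=0}^p S(p,j) (r+j)! A(r,x,j) x^j, where A(r,x,j) = Σ_{m=0}^r C(r,m) x^m ζ(m+j+1, 2−x) and the series on the left converges absolutely. (Since p > 0, S(p,0) = 0, so every Hurwitz zeta value appearing with nonzero coefficient is well defined.) -/

import Mathlib

open Finset Real

/-- Stirling numbers of the second kind. -/
def stirling2 : ℕ → ℕ → ℕ
  | 0, 0 => 1
  | 0, _ + 1 => 0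
  | _ + 1, 0 => 0
  | n + 1, k + 1 => (k + 1) * stirling2 n (k + 1) + stirling2 n k

/-- The Riemann zeta function `ζ(s) = Σ_{m=1}^∞ m^{-s}` (for real `s > 1`). -/
noncomputable def realZeta (s : ℝ) : ℝ := ∑' m : ℕ, 1 / ((m : ℝ) + 1) ^ s

/-- The Hurwitz zeta function `ζ(s,a) = Σ_{k=0}^∞ (k+a)^{-s}` (for real `a > 0`, `s > 1`). -/
noncomputable def hurwitzZetaReal (s a : ℝ) : ℝ := ∑' k : ℕ, 1 / ((k : ℝ) + a) ^ s

/-!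
Writing `ζ(n+1) - 1 = Σ_{k ≥ 0} (k+2)^{-(n+1)}` turns the left side into a double series over
`(k, n)`, which converges absolutely for `|x| < 2` and may therefore be summed over `n` first.
For fixed `k`, the expansion `n^p = Σ_j S(p,j) n(n-1)⋯(n-j+1)` together with
`r! C(n+r,n) n(n-1)⋯(n-j+1) = (r+j)! C(n+r,r+j)` reduces the inner series to
`Σ_n C(n+r,r+j) t^n = t^j / (1-t)^(r+j+1)` at `t = x/(k+2)`. Expanding
`(k+2)^r = (x + (k+2-x))^r` binomially rewrites the result in powers of `1/(k+2-x)`, and the sum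
over `k` of these powers is `ζ(m+j+1, 2-x)`.
-/

open scoped Nat

theorem stirling2_eq_stirlingSecond : stirling2 = Nat.stirlingSecond := by
  ext n k
  induction n generalizing k with
  | zero => cases k <;> rfl
  | succ n ih => cases k <;> simp [stirling2, Nat.stirlingSecond, ih]

theorem Nat.mul_descFactorial_eq_descFactorial_succ_add (n j : ℕ) :
    n * n.descFactorial j = n.descFactorial (j + 1) + j * n.descFactorial j := by
  rw [Nat.descFactorial_succ, ← Nat.add_mul]
  rcases le_or_gt j n with h | h
  · rw [Nat.sub_add_cancel h]
  · simp [Nat.descFactorial_of_lt h]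

theorem Nat.pow_eq_sum_stirlingSecond_mul_descFactorial (n p : ℕ) :
    n ^ p = ∑ j ∈ range (p + 1), p.stirlingSecond j * n.descFactorial j := by
  induction p with
  | zero => simp
  | succ p ih =>
    have hshift :
        ∑ j ∈ range (p + 1), (j + 1) * p.stirlingSecond (j + 1) * n.descFactorial (j + 1)
          = ∑ j ∈ range (p + 1), j * p.stirlingSecond j * n.descFactorial j := by
      have h :=
        Finset.sum_range_succ' (fun j => j * p.stirlingSecond j * n.descFactorial j) (p + 1)
      rw [Finset.sum_range_succ, Nat.stirlingSecond_eq_zero_of_lt (Nat.lt_succ_self p)] at h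
      simpa using h.symm
    calc n ^ (p + 1)
        = ∑ j ∈ range (p + 1), (p.stirlingSecond j * n.descFactorial (j + 1)
            + j * p.stirlingSecond j * n.descFactorial j) := by
          rw [pow_succ, ih, Finset.sum_mul]
          refine Finset.sum_congr rfl fun j _ => ?_
          rw [mul_assoc, mul_comm _ n, Nat.mul_descFactorial_eq_descFactorial_succ_add]
          ring
      _ = ∑ j ∈ range (p + 1), ((j + 1) * p.stirlingSecond (j + 1) + p.stirlingSecond j) *
            n.descFactorial (j + 1) := by
          rw [Finset.sum_add_distrib, ← hshift, ← Finset.sum_add_distrib]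
          exact Finset.sum_congr rfl fun j _ => by ring
      _ = _ := by
          rw [Finset.sum_range_succ' _ (p + 1)]
          simp [Nat.stirlingSecond_succ_succ]

theorem Nat.factorial_mul_choose_mul_descFactorial (n r j : ℕ) :
    r ! * (n + r).choose n * n.descFactorial j = (r + j)! * (n + r).choose (r + j) := by
  have h := Nat.descFactorial_mul_descFactorial (n := n + r) (Nat.le_add_right r j)
  rw [Nat.add_sub_cancel, Nat.add_sub_cancel_left] at h
  rw [Nat.choose_symm_add, ← Nat.descFactorial_eq_factorial_mul_choose,
    ← Nat.descFactorial_eq_factorial_mul_choose, ← h, mul_comm]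

theorem factorial_mul_choose_mul_pow_eq_sum_stirling2 (n r p : ℕ) :
    r ! * (n + r).choose n * n ^ p =
      ∑ j ∈ range (p + 1), stirling2 p j * (r + j)! * (n + r).choose (r + j) := by
  rw [Nat.pow_eq_sum_stirlingSecond_mul_descFactorial, Finset.mul_sum, stirling2_eq_stirlingSecond]
  refine Finset.sum_congr rfl fun j _ => ?_
  rw [mul_left_comm, Nat.factorial_mul_choose_mul_descFactorial, mul_assoc]

/-- With `c q = ζ(q, 2 - y)` this is `(1/r!) Σ_j S(p,j) (r+j)! A(r,y,j) y^j`. -/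
def stirlingBinomialSum {𝕜 : Type*} [Field 𝕜] (r p : ℕ) (y : 𝕜) (c : ℕ → 𝕜) : 𝕜 :=
  1 / (r ! : 𝕜) * ∑ j ∈ range (p + 1), (stirling2 p j : 𝕜) * ((r + j)! : 𝕜) *
    (∑ m ∈ range (r + 1), (r.choose m : 𝕜) * y ^ m * c (m + j + 1)) * y ^ j

theorem hasSum_stirlingBinomialSum {ι 𝕜 : Type*} [Field 𝕜] [TopologicalSpace 𝕜]
    [IsTopologicalRing 𝕜] {r p : ℕ} (hp : p ≠ 0) (y : 𝕜) {u : ι → ℕ → 𝕜} {v : ℕ → 𝕜}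
    (h : ∀ q, 2 ≤ q → HasSum (fun i => u i q) (v q)) :
    HasSum (fun i => stirlingBinomialSum r p y (u i)) (stirlingBinomialSum r p y v) := by
  refine (hasSum_sum fun j _ => ?_).mul_left _
  -- `S(p,0) = 0` removes the terms `j = 0`, the only ones where `m + j + 1` can be `1`.
  rcases j with _ | j
  · obtain ⟨p, rfl⟩ := Nat.exists_eq_succ_of_ne_zero hp
    simp [stirling2]
  · exact ((hasSum_sum fun m _ => (h _ (by omega)).mul_left _).mul_left _).mul_right _

theorem div_one_sub_div_pow_div_eq_sum_choose {𝕜 : Type*} [Field 𝕜] {y A : 𝕜} (hA : A ≠ 0)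
    (hAy : A - y ≠ 0) (r j : ℕ) :
    (y / A) ^ j / (1 - y / A) ^ (r + j + 1) / A
      = y ^ j * ∑ m ∈ range (r + 1), (r.choose m : 𝕜) * y ^ m * (1 / (A - y) ^ (m + j + 1)) := by
  have hbinom : A ^ r = ∑ m ∈ range (r + 1), y ^ m * (A - y) ^ (r - m) * r.choose m := by
    simpa using add_pow y (A - y) r
  calc (y / A) ^ j / (1 - y / A) ^ (r + j + 1) / A = y ^ j * A ^ r / (A - y) ^ (r + j + 1) := by
        rw [one_sub_div hA, div_pow, div_pow, div_div_div_eq, div_div, pow_add, pow_add, pow_one]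
        field_simp
    _ = _ := by
        rw [hbinom, Finset.mul_sum, Finset.sum_div, Finset.mul_sum]
        refine Finset.sum_congr rfl fun m hm => ?_
        have hmr : r + j + 1 = (r - m) + (m + j + 1) := by have := Finset.mem_range.1 hm; omega
        rw [hmr, pow_add]; field_simp

section NormedField

variable {𝕜 : Type*} [NormedField 𝕜]

theorem hasSum_choose_add_mul_geometric (r j : ℕ) {t : 𝕜} (ht : ‖t‖ < 1) :
    HasSum (fun n : ℕ => ((n + r).choose (r + j) : 𝕜) * t ^ n)
      (t ^ j / (1 - t) ^ (r + j + 1)) := by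
  refine (hasSum_nat_add_iff' j).1 ?_
  have hvanish : ∑ i ∈ range j, ((i + r).choose (r + j) : 𝕜) * t ^ i = 0 :=
    Finset.sum_eq_zero fun i hi => by
      rw [Nat.choose_eq_zero_of_lt (by have := Finset.mem_range.1 hi; omega), Nat.cast_zero,
        zero_mul]
  rw [hvanish, sub_zero, div_eq_mul_one_div]
  refine ((hasSum_choose_mul_geometric_of_norm_lt_one (r + j) ht).mul_left (t ^ j)).congr_fun
    fun n => ?_
  rw [show n + j + r = n + (r + j) by omega, pow_add]
  ring

variable [CharZero 𝕜]

theorem hasSum_choose_mul_pow_mul_geometric (r p : ℕ) {t : 𝕜} (ht : ‖t‖ < 1) :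
    HasSum (fun n : ℕ => ((n + r).choose n : 𝕜) * (n : 𝕜) ^ p * t ^ n)
      (1 / (r ! : 𝕜) * ∑ j ∈ range (p + 1),
        (stirling2 p j : 𝕜) * ((r + j)! : 𝕜) * (t ^ j / (1 - t) ^ (r + j + 1))) := by
  have hr : (r ! : 𝕜) ≠ 0 := Nat.cast_ne_zero.2 r.factorial_ne_zero
  refine ((hasSum_sum fun j _ => (hasSum_choose_add_mul_geometric r j ht).mul_left
    ((stirling2 p j : 𝕜) * ((r + j)! : 𝕜))).mul_left (1 / (r ! : 𝕜))).congr_fun fun n => ?_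
  have hnat := congrArg (Nat.cast (R := 𝕜)) (factorial_mul_choose_mul_pow_eq_sum_stirling2 n r p)
  push_cast at hnat
  simp only [← mul_assoc, ← Finset.sum_mul, ← hnat]
  field_simp

theorem hasSum_choose_mul_pow_mul_div_pow (r p : ℕ) {y A : 𝕜} (hyA : ‖y‖ < ‖A‖) :
    HasSum (fun n : ℕ => ((n + r).choose n : 𝕜) * (n : 𝕜) ^ p * y ^ n / A ^ (n + 1))
      (stirlingBinomialSum r p y fun q => 1 / (A - y) ^ q) := by
  have hA : A ≠ 0 := norm_pos_iff.1 ((norm_nonneg y).trans_lt hyA)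
  have hAy : A - y ≠ 0 := sub_ne_zero.2 fun h => hyA.ne (h ▸ rfl)
  have ht : ‖y / A‖ < 1 := by rwa [norm_div, div_lt_one ((norm_nonneg y).trans_lt hyA)]
  have h := (hasSum_choose_mul_pow_mul_geometric r p ht).div_const A
  have hvalue : (1 / (r ! : 𝕜) * ∑ j ∈ range (p + 1), (stirling2 p j : 𝕜) * ((r + j)! : 𝕜) *
      ((y / A) ^ j / (1 - y / A) ^ (r + j + 1))) / A =
        stirlingBinomialSum r p y fun q => 1 / (A - y) ^ q := by
    rw [stirlingBinomialSum, mul_div_assoc, Finset.sum_div]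
    congr 1
    refine Finset.sum_congr rfl fun j _ => ?_
    rw [mul_div_assoc, div_one_sub_div_pow_div_eq_sum_choose hA hAy]
    ring
  rw [hvalue] at h
  refine h.congr_fun fun n => ?_
  rw [div_pow, pow_succ]
  field_simp

theorem hasSum_choose_mul_succ_pow_mul_div_pow {r p : ℕ} (hp : p ≠ 0) {y A : 𝕜}
    (hyA : ‖y‖ < ‖A‖) :
    HasSum (fun n : ℕ =>
        ((n + 1 + r).choose (n + 1) : 𝕜) * ((n : 𝕜) + 1) ^ p * y ^ (n + 1) / A ^ (n + 2))
      (stirlingBinomialSum r p y fun q => 1 / (A - y) ^ q) := by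
  have h := (hasSum_nat_add_iff' (f := fun n : ℕ =>
    ((n + r).choose n : 𝕜) * (n : 𝕜) ^ p * y ^ n / A ^ (n + 1)) 1).2
    (hasSum_choose_mul_pow_mul_div_pow r p hyA)
  simp only [sum_range_one, Nat.cast_zero, zero_pow hp, mul_zero, zero_mul, zero_div,
    sub_zero] at h
  refine h.congr_fun fun n => ?_
  push_cast
  rfl

end NormedField

theorem hasSum_hurwitzZetaReal {s a : ℝ} (hs : 1 < s) (ha : 0 < a) :
    HasSum (fun k : ℕ => 1 / ((k : ℝ) + a) ^ s) (hurwitzZetaReal s a) :=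
  (((Real.summable_one_div_nat_add_rpow a s).2 hs).congr fun k => by
    rw [abs_of_pos (by positivity)]).hasSum

theorem hasSum_realZeta_sub_one {s : ℝ} (hs : 1 < s) :
    HasSum (fun k : ℕ => 1 / ((k : ℝ) + 2) ^ s) (realZeta s - 1) := by
  have h := (hasSum_nat_add_iff' 1).2 (hasSum_hurwitzZetaReal hs one_pos)
  simp only [range_one, sum_singleton, Nat.cast_zero, zero_add, one_rpow, div_one] at h
  refine h.congr_fun fun k => ?_
  rw [Nat.cast_succ, add_assoc, one_add_one_eq_two]

theorem hasSum_stirlingBinomialSum_hurwitzZetaReal {r p : ℕ} (hp : p ≠ 0) {y : ℝ} (hy : y < 2) :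
    HasSum (fun k : ℕ => stirlingBinomialSum r p y fun q => 1 / ((k : ℝ) + 2 - y) ^ q)
      (stirlingBinomialSum r p y fun q => hurwitzZetaReal q (2 - y)) :=
  hasSum_stirlingBinomialSum hp y fun q hq =>
    (hasSum_hurwitzZetaReal (by exact_mod_cast hq) (by linarith)).congr_fun fun k => by
      rw [Real.rpow_natCast, add_sub_assoc]

theorem summable_abs_and_hasSum_of_summable_abs_prod {β γ : Type*} {F : β → γ → ℝ}
    {g : β → ℝ} {h : γ → ℝ} {S : ℝ} (habs : Summable fun q : β × γ => |F q.1 q.2|)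
    (hg : ∀ b, HasSum (F b) (g b)) (hS : HasSum g S) (hh : ∀ c, HasSum (fun b => F b c) (h c)) :
    Summable (fun c => |h c|) ∧ HasSum h S := by
  have hF := habs.of_abs.hasSum
  have hswap := (Equiv.prodComm γ β).hasSum_iff.2 hF
  refine ⟨?_, hS.unique (hF.prod_fiberwise hg) ▸ hswap.prod_fiberwise hh⟩
  obtain ⟨hcol, hsum⟩ := (summable_prod_of_nonneg fun _ => abs_nonneg _).1 habs.prod_symm
  refine Summable.of_nonneg_of_le (fun c => abs_nonneg _) (fun c => ?_) hsum
  rw [← (hh c).tsum_eq, ← Real.norm_eq_abs]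
  exact norm_tsum_le_tsum_norm (hcol c)

/-- For naturals `r`, `p` with `p > 0` and real `|x| < 2`,
`Σ_{n=1}^∞ C(n+r,n) n^p (ζ(n+1) − 1) x^n = (1/r!) Σ_{j=0}^p S(p,j) (r+j)! A(r,x,j) x^j`,
where `A(r,x,j) = Σ_{m=0}^r C(r,m) x^m ζ(m+j+1, 2−x)`,
with the series on the left converging absolutely. -/
theorem series_zeta_values' (r p : ℕ) (hp : 0 < p) (x : ℝ) (hx : |x| < 2) :
    (Summable fun n : ℕ =>
      |(Nat.choose (n + 1 + r) (n + 1) : ℝ) * ((n : ℝ) + 1) ^ p *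
        (realZeta ((n : ℝ) + 1 + 1) - 1) * x ^ (n + 1)|) ∧
    HasSum (fun n : ℕ =>
      (Nat.choose (n + 1 + r) (n + 1) : ℝ) * ((n : ℝ) + 1) ^ p *
        (realZeta ((n : ℝ) + 1 + 1) - 1) * x ^ (n + 1))
      (1 / (r.factorial : ℝ) * ∑ j ∈ Finset.range (p + 1),
        (stirling2 p j : ℝ) * ((r + j).factorial : ℝ) *
          (∑ m ∈ Finset.range (r + 1),
            (Nat.choose r m : ℝ) * x ^ m * hurwitzZetaReal ((m : ℝ) + (j : ℝ) + 1) (2 - x)) *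
          x ^ j) := by
  let F : ℝ → ℕ → ℕ → ℝ := fun y k n =>
    ((n + 1 + r).choose (n + 1) : ℝ) * ((n : ℝ) + 1) ^ p * y ^ (n + 1) / ((k : ℝ) + 2) ^ (n + 2)
  have hrow (y : ℝ) (hy : |y| < 2) (k : ℕ) :
      HasSum (F y k) (stirlingBinomialSum r p y fun q => 1 / ((k : ℝ) + 2 - y) ^ q) :=
    hasSum_choose_mul_succ_pow_mul_div_pow hp.ne' <| by
      rw [Real.norm_eq_abs, Real.norm_eq_abs, abs_of_pos (by positivity : (0 : ℝ) < k + 2)]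
      linarith [k.cast_nonneg (α := ℝ)]
  have hxabs : |(|x|)| < 2 := by rwa [abs_abs]
  have hFabs (k n : ℕ) : |F x k n| = F |x| k n := by
    simp only [F, abs_div, abs_mul, abs_pow, Nat.abs_cast]
    rw [abs_of_pos (by positivity : (0 : ℝ) < n + 1), abs_of_pos (by positivity : (0 : ℝ) < k + 2)]
  have habs : Summable fun q : ℕ × ℕ => |F x q.1 q.2| := by
    simp only [hFabs]
    refine (summable_prod_of_nonneg fun q => ?_).2 ⟨fun k => (hrow |x| hxabs k).summable, ?_⟩
    · rw [← hFabs]; exact abs_nonneg _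
    exact (hasSum_stirlingBinomialSum_hurwitzZetaReal hp.ne' hx).summable.congr fun k =>
      ((hrow |x| hxabs k).tsum_eq).symm
  have hcol (n : ℕ) : HasSum (fun k => F x k n) ((Nat.choose (n + 1 + r) (n + 1) : ℝ) *
      ((n : ℝ) + 1) ^ p * (realZeta ((n : ℝ) + 1 + 1) - 1) * x ^ (n + 1)) := by
    refine (((hasSum_realZeta_sub_one (by linarith [n.cast_nonneg (α := ℝ)])).mul_left _).mul_right
      _).congr_fun fun k => ?_
    rw [show ((n : ℝ) + 1 + 1) = ((n + 2 : ℕ) : ℝ) by push_cast; ring, Real.rpow_natCast]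
    ring
  obtain ⟨hsummable, hsum⟩ :=
    summable_abs_and_hasSum_of_summable_abs_prod habs (hrow x hx)
      (hasSum_stirlingBinomialSum_hurwitzZetaReal hp.ne' ((le_abs_self x).trans_lt hx)) hcol
  refine ⟨hsummable, ?_⟩
  simpa [stirlingBinomialSum] using hsum
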